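/- Let n ≥ 2 and let a = (a_{ij})_{0≤i,j≤n} be the Cartan matrix of affine type A_n^{(1)}: a_{ii} = 2 and a_{ij} = −1 if i − j ≡ ±1 (mod n+1), a_{ij} = 0 otherwise. For every nonzero integer l, the n×(n+1) matrix over ℚ(q) with entries [l·a_{ij}] for 1 ≤ i ≤ n, 0 ≤ j ≤ n, has rank n; consequently its kernel in ℚ(q)^{n+1} is one-dimensional. -/

import Mathlib

/-- The base field `ℚ(q)`. -/
abbrev Kq : Type := RatFunc ℚ

/-- The variable `q` of `ℚ(q)`. -/
noncomputable def qvar : Kq := RatFunc.X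

/-- The quantum integer `[n] = (q^n − q^{−n})/(q − q^{−1})` in `ℚ(q)`. -/
noncomputable def qint (n : ℤ) : Kq := (qvar ^ n - qvar ^ (-n)) / (qvar - qvar⁻¹)

lemma qvar_ne_zero : qvar ≠ 0 := RatFunc.X_ne_zero

lemma qpow_ne_one (m : ℕ) (hm : m ≠ 0) : qvar ^ m ≠ 1 := by
  intro h
  have h2 : algebraMap (Polynomial ℚ) Kq (Polynomial.X ^ m) = algebraMap (Polynomial ℚ) Kq 1 := by
    rw [map_pow, RatFunc.algebraMap_X, map_one]
    exact h
  have h3 : (Polynomial.X : Polynomial ℚ) ^ m = 1 := RatFunc.algebraMap_injective ℚ h2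
  have := congrArg Polynomial.natDegree h3
  simp [Polynomial.natDegree_X_pow] at this
  exact hm this

lemma qzpow_ne_one (m : ℤ) (hm : m ≠ 0) : qvar ^ m ≠ 1 := by
  rcases lt_trichotomy m 0 with h | h | h
  · intro he
    have h1 : qvar ^ (-m) = 1 := by
      rw [← inv_inj]
      simpa [← zpow_neg] using he
    have : qvar ^ ((-m).toNat) ≠ 1 := qpow_ne_one _ (by omega)
    rw [← zpow_natCast, Int.toNat_of_nonneg (by omega)] at this
    exact this h1
  · exact absurd h hm
  · intro he
    have : qvar ^ (m.toNat) ≠ 1 := qpow_ne_one _ (by omega)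
    rw [← zpow_natCast, Int.toNat_of_nonneg (by omega)] at this
    exact this he

lemma qzpow_sub_ne_zero (k : ℤ) (hk : k ≠ 0) : qvar ^ k - qvar ^ (-k) ≠ 0 := by
  intro h
  have he : qvar ^ k = qvar ^ (-k) := by linear_combination h
  have : qvar ^ (k + k) = 1 := by
    rw [zpow_add₀ qvar_ne_zero]
    nth_rewrite 2 [he]
    rw [← zpow_add₀ qvar_ne_zero]
    simp
  exact qzpow_ne_one _ (by omega) this

lemma denom_ne_zero : qvar - qvar⁻¹ ≠ 0 := by
  have := qzpow_sub_ne_zero 1 one_ne_zero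
  rw [zpow_one] at this
  simpa [zpow_neg, zpow_one] using this

lemma qint_ne_zero (k : ℤ) (hk : k ≠ 0) : qint k ≠ 0 :=
  div_ne_zero (qzpow_sub_ne_zero k hk) denom_ne_zero

lemma qint_zero : qint 0 = 0 := by simp [qint]

lemma qint_neg (k : ℤ) : qint (-k) = -qint k := by
  simp only [qint, neg_neg]
  ring

lemma qint_rec (l k : ℤ) :
    qint (2 * l) * qint (l * k) = qint l * (qint (l * (k + 1)) + qint (l * (k - 1))) := by
  have hq := qvar_ne_zero
  have hd := denom_ne_zero
  have ha : (qvar : Kq) ^ l ≠ 0 := zpow_ne_zero _ hq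
  have hb : (qvar : Kq) ^ (l * k) ≠ 0 := zpow_ne_zero _ hq
  have e1 : (2 : ℤ) * l = l + l := by ring
  have e2 : l * (k + 1) = l * k + l := by ring
  have e3 : l * (k - 1) = l * k - l := by ring
  simp only [qint, e1, e2, e3, neg_add, neg_sub, zpow_add₀ hq, zpow_sub₀ hq, zpow_neg]
  rw [div_mul_div_comm, ← add_div, div_mul_div_comm]
  congr 1
  generalize (qvar : Kq) ^ (l * k) = b at hb ⊢
  generalize (qvar : Kq) ^ l = a at ha ⊢
  field_simp
  ring

/-- The ZMod-condition rephrased as cyclic `Fin` arithmetic. -/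
lemma zmod_cond (n : ℕ) (hn : 2 ≤ n) (r j : Fin (n + 1)) :
    (((r : ℕ) : ZMod (n + 1)) - ((j : ℕ) : ZMod (n + 1)) = 1) ↔ r = j + 1 := by
  have inj : ∀ s t : Fin (n + 1),
      ((s : ℕ) : ZMod (n + 1)) = ((t : ℕ) : ZMod (n + 1)) → s = t := by
    intro s t h
    have := congrArg ZMod.val h
    rwa [ZMod.val_cast_of_lt s.isLt, ZMod.val_cast_of_lt t.isLt, ← Fin.ext_iff] at this
  have hadd : (((j + 1 : Fin (n + 1)) : ℕ) : ZMod (n + 1)) = ((j : ℕ) : ZMod (n + 1)) + 1 := by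
    rw [Fin.val_add, Fin.val_one', ZMod.natCast_mod, Nat.mod_eq_of_lt (by omega),
      Nat.cast_add, Nat.cast_one]
  constructor
  · intro h
    apply inj
    rw [hadd]
    linear_combination h
  · intro h
    rw [h, hadd]
    ring

lemma fin_two_ne_zero (n : ℕ) (hn : 2 ≤ n) : (1 : Fin (n + 1)) + 1 ≠ 0 := by
  intro h
  have := congrArg Fin.val h
  rw [Fin.val_add, Fin.val_one'] at this
  rw [Nat.mod_eq_of_lt (show 1 < n + 1 by omega)] at this
  rw [Nat.mod_eq_of_lt (show 1 + 1 < n + 1 by omega)] at this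
  simp at this

lemma fin_one_ne_zero' (n : ℕ) (hn : 2 ≤ n) : (1 : Fin (n + 1)) ≠ 0 := by
  intro h
  have := congrArg Fin.val h
  rw [Fin.val_one', Nat.mod_eq_of_lt (by omega)] at this
  simp at this

/-- Key lemma: a kernel vector vanishing at `0` vanishes everywhere. -/
lemma kernel_vanish (n : ℕ) (hn : 2 ≤ n) (l : ℤ) (hl : l ≠ 0)
    (a : Fin (n + 1) → Fin (n + 1) → ℤ)
    (ha : ∀ i j, a i j =
      if i = j then 2
      else if ((i : ℕ) : ZMod (n + 1)) - ((j : ℕ) : ZMod (n + 1)) = 1 ∨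
              ((j : ℕ) : ZMod (n + 1)) - ((i : ℕ) : ZMod (n + 1)) = 1 then -1 else 0)
    (A : Matrix (Fin n) (Fin (n + 1)) Kq)
    (hA : A = Matrix.of fun i j => qint (l * a i.succ j))
    (x : Fin (n + 1) → Kq) (hx : A.mulVec x = 0) (h0 : x 0 = 0) : x = 0 := by
  have ha' : ∀ r j : Fin (n + 1), a r j =
      if r = j then 2 else if r = j + 1 ∨ j = r + 1 then -1 else 0 := by
    intro r j
    rw [ha]
    simp only [zmod_cond n hn]
  have hL : qint l ≠ 0 := qint_ne_zero l hl
  -- the three-term recurrences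
  have E : ∀ p r s : Fin (n + 1), r ≠ 0 → p + 1 = r → r + 1 = s →
      qint (2 * l) * x r = qint l * (x p + x s) := by
    intro p r s hr hp hs
    have hrv : (r : ℕ) ≠ 0 := fun h => hr (Fin.ext h)
    set i : Fin n := ⟨(r : ℕ) - 1, by omega⟩ with hi
    have hisucc : i.succ = r := by
      apply Fin.ext
      simp [hi, Fin.val_succ]
      omega
    have h1 : ∑ j, qint (l * a i.succ j) * x j = 0 := by
      have := congrFun hx i
      rw [hA] at this
      simpa [Matrix.mulVec, dotProduct] using this
    rw [hisucc] at h1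
    -- distinctness
    have hpr : p ≠ r := by
      intro h
      apply fin_one_ne_zero' n hn
      rw [h] at hp
      letI := Fin.instCommRing (n + 1); linear_combination hp
    have hrs : r ≠ s := by
      intro h
      apply fin_one_ne_zero' n hn
      rw [← h] at hs
      letI := Fin.instCommRing (n + 1); linear_combination hs
    have hps : p ≠ s := by
      intro h
      apply fin_two_ne_zero n hn
      rw [h] at hp
      letI := Fin.instCommRing (n + 1); linear_combination hp + hs
    -- sum reduces to three terms
    have hsub : ∑ j ∈ ({p, r, s} : Finset (Fin (n + 1))), qint (l * a r j) * x j
        = ∑ j, qint (l * a r j) * x j := by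
      apply Finset.sum_subset (Finset.subset_univ _)
      intro j _ hj
      simp only [Finset.mem_insert, Finset.mem_singleton, not_or] at hj
      obtain ⟨hjp, hjr, hjs⟩ := hj
      have : a r j = 0 := by
        rw [ha']
        rw [if_neg (fun h => hjr (by rw [h])), if_neg]
        rintro (h | h)
        · exact hjp (by letI := Fin.instCommRing (n + 1); linear_combination -h - hp)
        · exact hjs (by rw [h, hs])
      rw [this]
      simp [qint_zero]
    rw [← hsub] at h1
    rw [Finset.sum_insert (by simp [hpr, hps]),
        Finset.sum_insert (by simp [hrs]), Finset.sum_singleton] at h1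
    have hap : a r p = -1 := by
      rw [ha', if_neg (Ne.symm hpr), if_pos (Or.inl hp.symm)]
    have har : a r r = 2 := by rw [ha', if_pos rfl]
    have has : a r s = -1 := by
      rw [ha', if_neg hrs, if_pos (Or.inr hs.symm)]
    rw [hap, har, has] at h1
    have e1 : qint (l * -1) = -qint l := by
      rw [show l * -1 = -l by ring, qint_neg]
    have e2 : qint (l * 2) = qint (2 * l) := by rw [mul_comm]
    rw [e1, e2] at h1
    linear_combination h1
  -- inductive claim
  have claim : ∀ j : ℕ, (hj : j ≤ n) →
      qint l * x ⟨j, by omega⟩ = x ⟨1, by omega⟩ * qint (l * (j : ℤ)) := by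
    intro j
    induction j using Nat.strong_induction_on with
    | _ j ih =>
      match j with
      | 0 =>
        intro _
        have h00 : (⟨0, by omega⟩ : Fin (n + 1)) = 0 := rfl
        rw [h00, h0]
        simp [qint_zero]
      | 1 =>
        intro _
        simp only [Nat.cast_one, mul_one]
        rw [mul_comm]
      | (k + 2) =>
        intro hj
        have hk1 : k + 1 ≤ n := by omega
        have hk : k ≤ n := by omega
        have hE := E ⟨k, by omega⟩ ⟨k + 1, by omega⟩ ⟨k + 2, by omega⟩
          (by intro h; exact absurd (congrArg Fin.val h) (by simp))
          (by apply Fin.ext; rw [Fin.val_add, Fin.val_one']; simp; omega)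
          (by apply Fin.ext; rw [Fin.val_add, Fin.val_one']; simp; omega)
        have h1 := ih k (by omega) hk
        have h2 := ih (k + 1) (by omega) hk1
        have hrec := qint_rec l ((k : ℤ) + 1)
        rw [show ((k : ℤ) + 1 + 1) = ((k : ℤ) + 2) by ring,
            show ((k : ℤ) + 1 - 1) = (k : ℤ) by ring] at hrec
        push_cast at h2 ⊢
        apply mul_left_cancel₀ hL
        linear_combination (-qint l) * hE + qint (2 * l) * h2 + (-qint l) * h1
          + x ⟨1, by omega⟩ * hrec
  -- the last row forces `x 1 = 0`
  have hx1 : x ⟨1, by omega⟩ = 0 := by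
    have hE := E ⟨n - 1, by omega⟩ ⟨n, by omega⟩ 0
      (by
        intro h
        have := congrArg Fin.val h
        simp only [Fin.val_zero] at this
        omega)
      (by
        apply Fin.ext
        rw [Fin.val_add, Fin.val_one', Nat.mod_eq_of_lt (show 1 < n + 1 by omega)]
        show (n - 1 + 1) % (n + 1) = n
        rw [Nat.mod_eq_of_lt (by omega)]
        omega)
      (by
        apply Fin.ext
        rw [Fin.val_add, Fin.val_one', Nat.mod_eq_of_lt (show 1 < n + 1 by omega)]
        show (n + 1) % (n + 1) = 0
        simp)
    rw [h0] at hE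
    have hcn := claim n le_rfl
    have hcn1 := claim (n - 1) (by omega)
    simp only [show (((n - 1 : ℕ)) : ℤ) = (n : ℤ) - 1 from by omega] at hcn1
    have hrec := qint_rec l (n : ℤ)
    have hzero : x ⟨1, by omega⟩ * (qint l * qint (l * ((n : ℤ) + 1))) = 0 := by
      linear_combination qint l * hE + (-(qint (2 * l))) * hcn + qint l * hcn1
        + (-(x ⟨1, by omega⟩)) * hrec
    rcases mul_eq_zero.mp hzero with h | h
    · exact h
    · exact absurd h (mul_ne_zero hL (qint_ne_zero _ (mul_ne_zero hl (by omega))))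
  funext j
  have hj := claim (j : ℕ) (by omega)
  rw [hx1, zero_mul] at hj
  have : x ⟨(j : ℕ), j.isLt⟩ = 0 := by
    rcases mul_eq_zero.mp hj with h | h
    · exact absurd h hL
    · exact h
  simpa using this

/-- For the Cartan matrix `a` of affine type `Aₙ⁽¹⁾` (`n ≥ 2`) and any `l ≠ 0`,
the `n×(n+1)` matrix `([l a_{ij}])_{1 ≤ i ≤ n, 0 ≤ j ≤ n}` over `ℚ(q)` has rank `n`,
and the kernel of the associated linear map `ℚ(q)^{n+1} → ℚ(q)^n` is one-dimensional. -/
theorem affine_quantum_cartan_rank (n : ℕ) (hn : 2 ≤ n) (l : ℤ) (hl : l ≠ 0)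
    (a : Fin (n + 1) → Fin (n + 1) → ℤ)
    (ha : ∀ i j, a i j =
      if i = j then 2
      else if ((i : ℕ) : ZMod (n + 1)) - ((j : ℕ) : ZMod (n + 1)) = 1 ∨
              ((j : ℕ) : ZMod (n + 1)) - ((i : ℕ) : ZMod (n + 1)) = 1 then -1 else 0)
    (A : Matrix (Fin n) (Fin (n + 1)) Kq)
    (hA : A = Matrix.of fun i j => qint (l * a i.succ j)) :
    A.rank = n ∧ Module.finrank Kq (LinearMap.ker A.mulVecLin) = 1 := by
  have hker : ∀ z : LinearMap.ker A.mulVecLin, z.1 0 = 0 → z = 0 := by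
    intro z hz
    have hmem : A.mulVec z.1 = 0 := by
      have h2 := z.2
      rw [LinearMap.mem_ker, Matrix.mulVecLin_apply] at h2
      exact h2
    exact Subtype.ext (kernel_vanish n hn l hl a ha A hA z.1 hmem hz)
  set φ : LinearMap.ker A.mulVecLin →ₗ[Kq] Kq :=
    (LinearMap.proj 0).comp (LinearMap.ker A.mulVecLin).subtype with hφ
  have hinj : Function.Injective φ := by
    rw [injective_iff_map_eq_zero]
    intro z hz
    exact hker z hz
  have h1 : Module.finrank Kq (LinearMap.ker A.mulVecLin) ≤ 1 := by
    have := LinearMap.finrank_le_finrank_of_injective hinj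
    simpa using this
  have hrn : Module.finrank Kq (LinearMap.range A.mulVecLin)
      + Module.finrank Kq (LinearMap.ker A.mulVecLin) = n + 1 := by
    rw [LinearMap.finrank_range_add_finrank_ker A.mulVecLin, Module.finrank_fin_fun]
  have hrdef : A.rank = Module.finrank Kq (LinearMap.range A.mulVecLin) := rfl
  have hub : A.rank ≤ n := by
    have := A.rank_le_card_height
    simpa using this
  constructor
  · omega
  · omega
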